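/- arXiv:2301.04257 — 5 statements merged into one kernel-verified Lean document; each statement's English description precedes it below -/
import Mathlib

section
/- Let u = (u_1, …, u_D) and v be D+1 independent random variables, each uniformly distributed on [−1, 1]. Then for any fixed x ∈ ℝ^D, E[ (⟨u, x⟩ + v)⁴ ] = (1/3)·‖x‖₂⁴ − (2/15)·‖x‖₄⁴ + (2/3)·‖x‖₂² + 1/5, where ⟨u, x⟩ = Σ_{i=1}^D u_i x_i. -/
open MeasureTheory Real

/-- The uniform probability distribution on `[-1, 1]`. -/
noncomputable def unif : Measure ℝ :=
  (2 : ENNReal)⁻¹ • (volume.restrict (Set.Icc (-1 : ℝ) 1))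

/-!
Expanding by the binomial theorem, the moments of `f + g` under a product measure are the
binomial convolution of the moments of `f` and `g`. Splitting off one coordinate at a time, this
shows by induction on the dimension that for i.i.d. coordinates whose odd moments vanish and
whose second and fourth moments are `m₂, m₄`, the odd moments of `⟨u, x⟩` vanish,
`E⟨u, x⟩² = m₂ ‖x‖₂²` and `E⟨u, x⟩⁴ = 3 m₂² ‖x‖₂⁴ + (m₄ - 3 m₂²) ‖x‖₄⁴`. For the uniform
law on `[-1, 1]`, `m₂ = 1/3` and `m₄ = 1/5`; one more binomial expansion in `v` gives the formula.
-/

open Finset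

section ProductMoments

variable {α β : Type*} [MeasurableSpace α] [MeasurableSpace β] {μ : Measure α} {ν : Measure β}
  {f : α → ℝ} {g : β → ℝ}

theorem integrable_add_pow_prod (hf : ∀ k, Integrable (fun a => f a ^ k) μ)
    (hg : ∀ k, Integrable (fun b => g b ^ k) ν) (k : ℕ) :
    Integrable (fun p : α × β => (f p.1 + g p.2) ^ k) (μ.prod ν) := by
  simp_rw [add_pow]
  exact integrable_finsetSum _ fun m _ => ((hf m).mul_prod (hg (k - m))).mul_const _

theorem integral_add_pow_prod [SFinite μ] [SFinite ν]
    (hf : ∀ k, Integrable (fun a => f a ^ k) μ)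
    (hg : ∀ k, Integrable (fun b => g b ^ k) ν) (k : ℕ) :
    ∫ p, (f p.1 + g p.2) ^ k ∂μ.prod ν =
      ∑ m ∈ range (k + 1), (∫ a, f a ^ m ∂μ) * (∫ b, g b ^ (k - m) ∂ν) * k.choose m := by
  simp_rw [add_pow]
  rw [integral_finsetSum _ fun m _ => ((hf m).mul_prod (hg (k - m))).mul_const _]
  refine sum_congr rfl fun m _ => ?_
  rw [integral_mul_const, integral_prod_mul (fun a => f a ^ m) (fun b => g b ^ (k - m))]

end ProductMoments

section LinearFormMoments

variable {μ : Measure ℝ}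

lemma sum_piFinSuccAbove_symm_mul {n : ℕ} (x : Fin (n + 1) → ℝ) (p : ℝ × (Fin n → ℝ)) :
    ∑ i, (MeasurableEquiv.piFinSuccAbove (fun _ => ℝ) 0).symm p i * x i =
      p.1 * x 0 + ∑ i, p.2 i * x i.succ := by
  simp [Fin.sum_univ_succ, Fin.insertNthEquiv]

lemma integrable_mul_const_pow (hint : ∀ k, Integrable (fun t => t ^ k) μ) (a : ℝ) (k : ℕ) :
    Integrable (fun t => (t * a) ^ k) μ := by
  simp_rw [mul_pow]
  exact (hint k).mul_const _

variable [IsProbabilityMeasure μ]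

theorem integrable_sum_mul_pow_pi (hint : ∀ k, Integrable (fun t => t ^ k) μ) {n : ℕ}
    (x : Fin n → ℝ) (k : ℕ) :
    Integrable (fun u => (∑ i, u i * x i) ^ k) (Measure.pi fun _ : Fin n => μ) := by
  induction n generalizing k with
  | zero => simp
  | succ n ih =>
    rw [← (measurePreserving_piFinSuccAbove (fun _ => μ) 0).symm.integrable_comp_emb
      (MeasurableEquiv.measurableEmbedding _)]
    simp only [Function.comp_def, sum_piFinSuccAbove_symm_mul]
    exact integrable_add_pow_prod (integrable_mul_const_pow hint (x 0)) (ih _) k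

theorem integral_sum_mul_pow_pi_succ (hint : ∀ k, Integrable (fun t => t ^ k) μ) {n : ℕ}
    (x : Fin (n + 1) → ℝ) (k : ℕ) :
    ∫ u, (∑ i, u i * x i) ^ k ∂(Measure.pi fun _ => μ) =
      ∑ m ∈ range (k + 1), x 0 ^ m * (∫ t, t ^ m ∂μ) *
        (∫ u, (∑ i, u i * x i.succ) ^ (k - m) ∂(Measure.pi fun _ : Fin n => μ)) * k.choose m := by
  rw [← (measurePreserving_piFinSuccAbove (fun _ => μ) 0).symm.integral_comp
      (MeasurableEquiv.measurableEmbedding _)]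
  simp only [sum_piFinSuccAbove_symm_mul]
  rw [integral_add_pow_prod (integrable_mul_const_pow hint (x 0))
    (integrable_sum_mul_pow_pi hint _)]
  simp_rw [mul_pow, integral_mul_const, mul_comm (x 0 ^ _)]

theorem integral_sum_mul_pow_pi_of_odd (hint : ∀ k, Integrable (fun t => t ^ k) μ)
    (hodd : ∀ k, Odd k → ∫ t, t ^ k ∂μ = 0) {n : ℕ} (x : Fin n → ℝ) {k : ℕ} (hk : Odd k) :
    ∫ u, (∑ i, u i * x i) ^ k ∂(Measure.pi fun _ => μ) = 0 := by
  induction n generalizing k with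
  | zero => simp [hk.pos.ne']
  | succ n ih =>
    rw [integral_sum_mul_pow_pi_succ hint]
    refine sum_eq_zero fun m hm => ?_
    rcases Nat.even_or_odd m with hm_even | hm_odd
    · rw [ih _ (Nat.Odd.sub_even (by simpa [Nat.lt_succ_iff] using hm) hk hm_even)]
      simp
    · simp [hodd m hm_odd]

theorem integral_sum_mul_pi (hint : ∀ k, Integrable (fun t => t ^ k) μ)
    (hodd : ∀ k, Odd k → ∫ t, t ^ k ∂μ = 0) {n : ℕ} (x : Fin n → ℝ) :
    ∫ u, ∑ i, u i * x i ∂(Measure.pi fun _ => μ) = 0 := by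
  simpa using integral_sum_mul_pow_pi_of_odd hint hodd x odd_one

theorem integral_sum_mul_sq_pi (hint : ∀ k, Integrable (fun t => t ^ k) μ)
    (hodd : ∀ k, Odd k → ∫ t, t ^ k ∂μ = 0) {n : ℕ} (x : Fin n → ℝ) :
    ∫ u, (∑ i, u i * x i) ^ 2 ∂(Measure.pi fun _ => μ) = (∫ t, t ^ 2 ∂μ) * ∑ i, x i ^ 2 := by
  induction n with
  | zero => simp
  | succ n ih =>
    rw [integral_sum_mul_pow_pi_succ hint, Fin.sum_univ_succ]
    simp [sum_range_succ, ih, integral_sum_mul_pi hint hodd]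
    ring

theorem integral_sum_mul_pow_four_pi (hint : ∀ k, Integrable (fun t => t ^ k) μ)
    (hodd : ∀ k, Odd k → ∫ t, t ^ k ∂μ = 0) {n : ℕ} (x : Fin n → ℝ) :
    ∫ u, (∑ i, u i * x i) ^ 4 ∂(Measure.pi fun _ => μ) =
      3 * (∫ t, t ^ 2 ∂μ) ^ 2 * (∑ i, x i ^ 2) ^ 2 +
        ((∫ t, t ^ 4 ∂μ) - 3 * (∫ t, t ^ 2 ∂μ) ^ 2) * ∑ i, x i ^ 4 := by
  induction n with
  | zero => simp
  | succ n ih =>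
    rw [integral_sum_mul_pow_pi_succ hint, Fin.sum_univ_succ, Fin.sum_univ_succ]
    simp [sum_range_succ, Nat.choose, ih, integral_sum_mul_pi hint hodd,
      integral_sum_mul_sq_pi hint hodd,
      integral_sum_mul_pow_pi_of_odd hint hodd _ (by decide : Odd 3)]
    ring

end LinearFormMoments

instance : IsProbabilityMeasure unif := ⟨by
  simp [unif, Real.volume_Icc, one_add_one_eq_two]
  exact ENNReal.inv_mul_cancel (by simp) (by simp)⟩

lemma integrable_pow_unif (k : ℕ) : Integrable (fun t => t ^ k) unif := by
  have h : IntegrableOn (fun t : ℝ => t ^ k) (Set.Icc (-1) 1) := (continuous_pow k).integrableOn_Icc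
  exact h.smul_measure (by simp)

lemma integral_pow_unif (n : ℕ) :
    ∫ t, t ^ n ∂unif = if Even n then ((n : ℝ) + 1)⁻¹ else 0 := by
  rw [unif, integral_smul_measure, integral_Icc_eq_integral_Ioc,
    ← intervalIntegral.integral_of_le (by norm_num), integral_pow]
  rcases Nat.even_or_odd n with h | h
  · have : (-1 : ℝ) ^ (n + 1) = -1 := h.add_one.neg_one_pow
    simp [h, this]
    ring
  · have : (-1 : ℝ) ^ (n + 1) = 1 := h.add_one.neg_one_pow
    simp [this, Nat.not_even_iff_odd.2 h]

theorem stmt_6_general (D : ℕ) (x : Fin D → ℝ) :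
    ∫ p : (Fin D → ℝ) × ℝ, ((∑ i, p.1 i * x i) + p.2) ^ 4
        ∂((Measure.pi fun _ : Fin D => unif).prod unif) =
      (1 / 3) * (∑ i, x i ^ 2) ^ 2 - (2 / 15) * (∑ i, x i ^ 4) +
        (2 / 3) * (∑ i, x i ^ 2) + 1 / 5 := by
  have hodd (k : ℕ) (hk : Odd k) : ∫ t, t ^ k ∂unif = 0 := by
    simp [integral_pow_unif, Nat.not_even_iff_odd.2 hk]
  have hexpand := integral_add_pow_prod (f := fun u => ∑ i, u i * x i) (g := fun t => t)
    (μ := Measure.pi fun _ : Fin D => unif) (ν := unif)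
    (integrable_sum_mul_pow_pi integrable_pow_unif x) integrable_pow_unif 4
  rw [hexpand]
  simp [sum_range_succ, Nat.choose, integral_pow_unif, integral_sum_mul_pi integrable_pow_unif hodd,
    integral_sum_mul_sq_pi integrable_pow_unif hodd,
    integral_sum_mul_pow_four_pi integrable_pow_unif hodd, (by decide : Even 4)]
  ring

/-- if `u = (u_1,…,u_D)` and `v` are `D+1` independent random variables, each
uniform on `[-1,1]`, then for any fixed `x ∈ ℝ^D`,
`E[(⟨u,x⟩ + v)⁴] = (1/3)‖x‖₂⁴ − (2/15)‖x‖₄⁴ + (2/3)‖x‖₂² + 1/5`. -/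
theorem stmt_6 (D : ℕ) (hD : 1 ≤ D) (x : Fin D → ℝ) :
    ∫ p : (Fin D → ℝ) × ℝ, ((∑ i, p.1 i * x i) + p.2) ^ 4
        ∂((Measure.pi fun _ : Fin D => unif).prod unif) =
      (1 / 3) * (∑ i, x i ^ 2) ^ 2 - (2 / 15) * (∑ i, x i ^ 4) +
        (2 / 3) * (∑ i, x i ^ 2) + 1 / 5 :=
  stmt_6_general D x
end

section
/- Let ε > 0 and let a, b, c, d be real numbers with a ≤ b − ε, b ≤ c, and c + ε ≤ d. Let X and Y be real random variables with E[X] = E[Y] = 0, such that X ∈ [b, c] almost surely and Y ∈ [a, b − ε] ∪ [c + ε, d] almost surely. Then E[ max(X, 0) ] < E[ max(Y, 0) ]. -/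
/-!
Since `X` has mean zero, `E[max(X, 0)] = E[g_s(X)]` for `g_s(t) = max(t, 0) - s t`, and likewise
for `Y`. The function `g_s` is convex with its minimum at `0`, so on `[b, c]` it is at most
`max(-s b, (1 - s) c)`, while off `(b - ε, c + ε)` it is at least `min(-s (b - ε), (1 - s)(c + ε))`.
The slope `s = (c + ε) / (c - b + 2ε)` makes `g_s` take the same value at `b - ε` and `c + ε`, and
then the first bound is strictly below the second.
-/

open MeasureTheory Set

lemma max_zero_sub_mul_le_of_mem_Icc {s b c x : ℝ} (hs0 : 0 ≤ s) (hs1 : s ≤ 1)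
    (hx : x ∈ Icc b c) : max x 0 - s * x ≤ max (-(s * b)) ((1 - s) * c) := by
  rcases le_total x 0 with h | h
  · rw [max_eq_right h]
    exact le_max_of_le_left (by nlinarith [hx.1])
  · rw [max_eq_left h]
    exact le_max_of_le_right (by nlinarith [hx.2])

lemma min_le_max_zero_sub_mul_of_notMem_Ioo {s p q y : ℝ} (hs0 : 0 ≤ s) (hs1 : s ≤ 1)
    (hp : p ≤ 0) (hq : 0 ≤ q) (hy : y ≤ p ∨ q ≤ y) :
    min (-(s * p)) ((1 - s) * q) ≤ max y 0 - s * y := by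
  rcases hy with h | h
  · rw [max_eq_right (h.trans hp)]
    exact min_le_of_left_le (by nlinarith)
  · rw [max_eq_left (hq.trans h)]
    exact min_le_of_right_le (by nlinarith)

section

variable {Ω : Type*} [MeasurableSpace Ω] {μ : Measure Ω} {X : Ω → ℝ}

lemma integral_max_zero_eq_integral_sub_mul (hX : Integrable X μ) (hmean : ∫ ω, X ω ∂μ = 0)
    (s : ℝ) : ∫ ω, max (X ω) 0 ∂μ = ∫ ω, (max (X ω) 0 - s * X ω) ∂μ := by
  rw [integral_sub hX.pos_part (hX.const_mul s), integral_const_mul, hmean, mul_zero, sub_zero]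

lemma integral_max_zero_le_of_ae_mem_Icc [IsProbabilityMeasure μ] (hX : Integrable X μ) (hmean : ∫ ω, X ω ∂μ = 0)
    {s b c : ℝ} (hs0 : 0 ≤ s) (hs1 : s ≤ 1) (hbc : ∀ᵐ ω ∂μ, X ω ∈ Icc b c) :
    ∫ ω, max (X ω) 0 ∂μ ≤ max (-(s * b)) ((1 - s) * c) := by
  rw [integral_max_zero_eq_integral_sub_mul hX hmean s]
  exact (convex_Iic _).integral_mem isClosed_Iic
    (hbc.mono fun ω hω ↦ max_zero_sub_mul_le_of_mem_Icc hs0 hs1 hω)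
    (hX.pos_part.sub (hX.const_mul s))

lemma min_le_integral_max_zero_of_ae_notMem_Ioo [IsProbabilityMeasure μ]
    (hX : Integrable X μ) (hmean : ∫ ω, X ω ∂μ = 0) {s p q : ℝ} (hs0 : 0 ≤ s) (hs1 : s ≤ 1) (hp : p ≤ 0) (hq : 0 ≤ q)
    (hpq : ∀ᵐ ω ∂μ, X ω ≤ p ∨ q ≤ X ω) :
    min (-(s * p)) ((1 - s) * q) ≤ ∫ ω, max (X ω) 0 ∂μ := by
  rw [integral_max_zero_eq_integral_sub_mul hX hmean s]
  exact (convex_Ici _).integral_mem isClosed_Ici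
    (hpq.mono fun ω hω ↦ min_le_max_zero_sub_mul_of_notMem_Ioo hs0 hs1 hp hq hω)
    (hX.pos_part.sub (hX.const_mul s))

end

theorem stmt_15_general {Ω₁ Ω₂ : Type*} [MeasurableSpace Ω₁] [MeasurableSpace Ω₂]
    (μ₁ : Measure Ω₁) (μ₂ : Measure Ω₂) [IsProbabilityMeasure μ₁] [IsProbabilityMeasure μ₂]
    (ε a b c d : ℝ) (hε : 0 < ε)
    (X : Ω₁ → ℝ) (Y : Ω₂ → ℝ) (hX : Measurable X) (hY : Measurable Y)
    (hXmean : ∫ ω, X ω ∂μ₁ = 0) (hYmean : ∫ ω, Y ω ∂μ₂ = 0)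
    (hXsupp : ∀ᵐ ω ∂μ₁, X ω ∈ Set.Icc b c)
    (hYsupp : ∀ᵐ ω ∂μ₂, Y ω ∈ Set.Icc a (b - ε) ∪ Set.Icc (c + ε) d) :
    ∫ ω, max (X ω) 0 ∂μ₁ < ∫ ω, max (Y ω) 0 ∂μ₂ := by
  have hXint : Integrable X μ₁ := .of_mem_Icc b c hX.aemeasurable hXsupp
  obtain ⟨C, hC⟩ :=
    ((isCompact_Icc (a := a) (b := b - ε)).union isCompact_Icc).isBounded.exists_norm_le
  have hYint : Integrable Y μ₂ := .of_bound hY.aestronglyMeasurable C (hYsupp.mono fun _ ↦ hC _)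
  obtain ⟨hb, hc⟩ : b ≤ 0 ∧ 0 ≤ c :=
    hXmean ▸ (convex_Icc b c).integral_mem isClosed_Icc hXsupp hXint
  have hden : 0 < c - b + 2 * ε := by linarith
  set s := (c + ε) / (c - b + 2 * ε)
  have hs0 : 0 < s := div_pos (by linarith) hden
  have hs1 : s < 1 := (div_lt_one hden).2 (by linarith)
  have hbalance : -(s * (b - ε)) = (1 - s) * (c + ε) := by
    linear_combination div_mul_cancel₀ (c + ε) hden.ne'
  have hYout : ∀ᵐ ω ∂μ₂, Y ω ≤ b - ε ∨ c + ε ≤ Y ω :=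
    hYsupp.mono fun _ hω ↦ hω.imp And.right And.left
  calc ∫ ω, max (X ω) 0 ∂μ₁ ≤ max (-(s * b)) ((1 - s) * c) :=
        integral_max_zero_le_of_ae_mem_Icc hXint hXmean hs0.le hs1.le hXsupp
    _ < min (-(s * (b - ε))) ((1 - s) * (c + ε)) := by
        rw [hbalance, min_self]
        exact max_lt (by nlinarith) (by nlinarith)
    _ ≤ ∫ ω, max (Y ω) 0 ∂μ₂ :=
        min_le_integral_max_zero_of_ae_notMem_Ioo hYint hYmean hs0.le hs1.le (by linarith)
          (by linarith) hYout

/-- Let `ε > 0` and `a ≤ b − ε`, `b ≤ c`, `c + ε ≤ d`. If `X`, `Y` are mean-zero real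
random variables with `X ∈ [b, c]` a.s. and `Y ∈ [a, b − ε] ∪ [c + ε, d]` a.s., then
`E[max(X, 0)] < E[max(Y, 0)]`. -/
theorem stmt_15 {Ω₁ Ω₂ : Type*} [MeasurableSpace Ω₁] [MeasurableSpace Ω₂]
    (μ₁ : Measure Ω₁) (μ₂ : Measure Ω₂) [IsProbabilityMeasure μ₁] [IsProbabilityMeasure μ₂]
    (ε a b c d : ℝ) (hε : 0 < ε) (hab : a ≤ b - ε) (hbc : b ≤ c) (hcd : c + ε ≤ d)
    (X : Ω₁ → ℝ) (Y : Ω₂ → ℝ) (hX : Measurable X) (hY : Measurable Y)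
    (hXmean : ∫ ω, X ω ∂μ₁ = 0) (hYmean : ∫ ω, Y ω ∂μ₂ = 0)
    (hXsupp : ∀ᵐ ω ∂μ₁, X ω ∈ Set.Icc b c)
    (hYsupp : ∀ᵐ ω ∂μ₂, Y ω ∈ Set.Icc a (b - ε) ∪ Set.Icc (c + ε) d) :
    ∫ ω, max (X ω) 0 ∂μ₁ < ∫ ω, max (Y ω) 0 ∂μ₂ :=
  stmt_15_general μ₁ μ₂ ε a b c d hε X Y hX hY hXmean hYmean hXsupp hYsupp
end

section
/- Let ε > 0 and let a, b, c, d be real numbers with a ≤ b − ε, b ≤ c, and c + ε ≤ d. Let X and Y be real random variables with E[X] = E[Y] = 0, such that X ∈ [b, c] almost surely and Y ∈ [a, b − ε] ∪ [c + ε, d] almost surely. Then E[ max(−X, 0) ] < E[ max(−Y, 0) ]. -/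
/-!
Mean zero forces `b ≤ 0 ≤ c`. The convex function `t ↦ max (-t) 0` lies below its chord `ℓ`
over `[b - ε, c + ε]` inside that interval, at least `ε² / (c - b + 2ε)` below it on `[b, c]`,
and above `ℓ` outside. Since `ℓ` is affine and both variables have mean zero,
`E[max (-X) 0] ≤ ℓ 0 - ε² / (c - b + 2ε) < ℓ 0 ≤ E[max (-Y) 0]`.
-/

open MeasureTheory Set

/-- The chord of `t ↦ max (-t) 0` through `b - ε` and `c + ε`. -/
noncomputable def negPartChord (b c ε x : ℝ) : ℝ := (ε - b) / (c - b + 2 * ε) * (c + ε - x)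

section negPartChord

variable {b c ε x : ℝ}

lemma max_neg_zero_add_le_negPartChord (hb : b ≤ 0) (hc : 0 ≤ c) (hε : 0 < ε)
    (hx : x ∈ Icc b c) : max (-x) 0 + ε ^ 2 / (c - b + 2 * ε) ≤ negPartChord b c ε x := by
  have hD : 0 < c - b + 2 * ε := by linarith [hx.1, hx.2]
  rw [negPartChord, div_mul_eq_mul_div, ← le_sub_iff_add_le, ← sub_div, le_div_iff₀ hD]
  rcases le_total x 0 with hx0 | hx0
  · rw [max_eq_left (neg_nonneg.2 hx0)]
    nlinarith [hx.1]
  · rw [max_eq_right (neg_nonpos.2 hx0)]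
    nlinarith [hx.2]

lemma negPartChord_le_max_neg_zero (hb : b ≤ 0) (hc : 0 ≤ c) (hε : 0 < ε)
    (hx : x ≤ b - ε ∨ c + ε ≤ x) : negPartChord b c ε x ≤ max (-x) 0 := by
  have hD : 0 < c - b + 2 * ε := by linarith
  rw [negPartChord, div_mul_eq_mul_div, div_le_iff₀ hD]
  rcases hx with hx | hx
  · nlinarith [le_max_left (-x) 0]
  · nlinarith [le_max_right (-x) 0]

variable {Ω : Type*} [MeasurableSpace Ω] {μ : Measure Ω} {X : Ω → ℝ}

lemma MeasureTheory.Integrable.negPartChord_comp [IsFiniteMeasure μ] (hX : Integrable X μ) :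
    Integrable (fun ω ↦ negPartChord b c ε (X ω)) μ :=
  ((integrable_const _).sub hX).const_mul _

lemma integral_negPartChord [IsProbabilityMeasure μ] (hX : Integrable X μ) :
    ∫ ω, negPartChord b c ε (X ω) ∂μ = negPartChord b c ε (∫ ω, X ω ∂μ) := by
  simp only [negPartChord]
  rw [integral_const_mul, integral_sub (integrable_const _) hX, integral_const, probReal_univ,
    one_smul]

end negPartChord

/-- Let `ε > 0` and `a ≤ b − ε`, `b ≤ c`, `c + ε ≤ d`. If `X`, `Y` are mean-zero real
random variables with `X ∈ [b, c]` a.s. and `Y ∈ [a, b − ε] ∪ [c + ε, d]` a.s., then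
`E[max(−X, 0)] < E[max(−Y, 0)]`. -/
theorem stmt_16 {Ω₁ Ω₂ : Type*} [MeasurableSpace Ω₁] [MeasurableSpace Ω₂]
    (μ₁ : Measure Ω₁) (μ₂ : Measure Ω₂) [IsProbabilityMeasure μ₁] [IsProbabilityMeasure μ₂]
    (ε a b c d : ℝ) (hε : 0 < ε) (hab : a ≤ b - ε) (hbc : b ≤ c) (hcd : c + ε ≤ d)
    (X : Ω₁ → ℝ) (Y : Ω₂ → ℝ) (hX : Measurable X) (hY : Measurable Y)
    (hXmean : ∫ ω, X ω ∂μ₁ = 0) (hYmean : ∫ ω, Y ω ∂μ₂ = 0)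
    (hXsupp : ∀ᵐ ω ∂μ₁, X ω ∈ Set.Icc b c)
    (hYsupp : ∀ᵐ ω ∂μ₂, Y ω ∈ Set.Icc a (b - ε) ∪ Set.Icc (c + ε) d) :
    ∫ ω, max (-X ω) 0 ∂μ₁ < ∫ ω, max (-Y ω) 0 ∂μ₂ := by
  have hXint : Integrable X μ₁ := .of_mem_Icc b c hX.aemeasurable hXsupp
  have hYint : Integrable Y μ₂ := by
    refine .of_mem_Icc a d hY.aemeasurable ?_
    filter_upwards [hYsupp] with ω hω
    rcases hω with hω | hω
    · exact ⟨hω.1, by linarith [hω.2]⟩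
    · exact ⟨by linarith [hω.1], hω.2⟩
  obtain ⟨hb, hc⟩ : (0 : ℝ) ∈ Icc b c :=
    hXmean ▸ (convex_Icc b c).integral_mem isClosed_Icc hXsupp hXint
  set δ := ε ^ 2 / (c - b + 2 * ε)
  have hδ : 0 < δ := by positivity
  calc ∫ ω, max (-X ω) 0 ∂μ₁ ≤ ∫ ω, (negPartChord b c ε (X ω) - δ) ∂μ₁ := by
        refine integral_mono_ae hXint.neg_part
          (hXint.negPartChord_comp.sub (integrable_const δ)) ?_
        filter_upwards [hXsupp] with ω hω
        linarith [max_neg_zero_add_le_negPartChord hb hc hε hω]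
    _ = negPartChord b c ε 0 - δ := by
        rw [integral_sub hXint.negPartChord_comp (integrable_const δ),
          integral_negPartChord hXint, hXmean]
        simp
    _ < negPartChord b c ε 0 := sub_lt_self _ hδ
    _ = ∫ ω, negPartChord b c ε (Y ω) ∂μ₂ := by rw [integral_negPartChord hYint, hYmean]
    _ ≤ ∫ ω, max (-Y ω) 0 ∂μ₂ := by
        refine integral_mono_ae hYint.negPartChord_comp hYint.neg_part ?_
        filter_upwards [hYsupp] with ω hω
        exact negPartChord_le_max_neg_zero hb hc hε
          (hω.imp (fun h ↦ h.2) (fun h ↦ h.1))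
end

section
/- Let ε > 0 and let a, b, c, d be real numbers with a ≤ b − ε, b ≤ c, and c + ε ≤ d. Let X and Y be real random variables with E[X] = E[Y] = 0, such that X ∈ [b, c] almost surely and Y ∈ [a, b − ε] ∪ [c + ε, d] almost surely. Then E[ |X| ] < E[ |Y| ]. -/
/-!
The chord of `|·|` over `[b, c]` (where `b ≤ 0 ≤ c`, forced by the zero mean of `X`) bounds `|x|`
from above on `[b, c]` and from below, by a margin proportional to `ε`, off the `ε`-neighbourhood
of `[b, c]`; multiplied through by `c - b`, these read `(c - b)|x| - (b + c)x ≤ -2bc` and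
`≥ -2bc + 2ε min(c, -b)`. Subtracting `b + c` times the mean, which is zero for both variables,
turns them into `(c - b) E|X| ≤ -2bc < (c - b) E|Y|`. When `b = 0` or `c = 0` the variable `X`
vanishes almost surely and instead `E|Y| ≥ ε > 0`.
-/

open MeasureTheory

section Chord

variable {b c : ℝ}

theorem mul_abs_sub_mul_le_of_mem_Icc (hb : b ≤ 0) (hc : 0 ≤ c) {x : ℝ} (hx : x ∈ Set.Icc b c) :
    (c - b) * |x| - (b + c) * x ≤ -2 * b * c := by
  obtain ⟨hbx, hxc⟩ := hx
  rcases le_total 0 x with h | h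
  · rw [abs_of_nonneg h]; nlinarith
  · rw [abs_of_nonpos h]; nlinarith

theorem le_mul_abs_sub_mul_of_gap (hb : b ≤ 0) (hc : 0 ≤ c) {ε y : ℝ} (hε : 0 ≤ ε)
    (hy : y ≤ b - ε ∨ c + ε ≤ y) :
    -2 * b * c + 2 * ε * min c (-b) ≤ (c - b) * |y| - (b + c) * y := by
  rcases hy with hy | hy
  · have : min c (-b) ≤ c := min_le_left _ _
    rw [abs_of_nonpos (by linarith)]; nlinarith
  · have : min c (-b) ≤ -b := min_le_right _ _
    rw [abs_of_nonneg (by linarith)]; nlinarith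

theorem le_abs_of_gap (hb : b ≤ 0) (hc : 0 ≤ c) {ε y : ℝ} (hy : y ≤ b - ε ∨ c + ε ≤ y) :
    ε ≤ |y| := by
  rcases hy with hy | hy
  · linarith [neg_le_abs y]
  · linarith [le_abs_self y]

end Chord

section MeanZero

variable {Ω : Type*} [MeasurableSpace Ω] {μ : Measure Ω} {X : Ω → ℝ}

theorem integral_abs_eq_zero_of_ae_nonneg (hX0 : ∫ ω, X ω ∂μ = 0)
    (hX : ∀ᵐ ω ∂μ, 0 ≤ X ω) : ∫ ω, |X ω| ∂μ = 0 := by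
  rw [← hX0]
  exact integral_congr_ae (hX.mono fun ω h => abs_of_nonneg h)

theorem integral_abs_eq_zero_of_ae_nonpos (hX0 : ∫ ω, X ω ∂μ = 0)
    (hX : ∀ᵐ ω ∂μ, X ω ≤ 0) : ∫ ω, |X ω| ∂μ = 0 := by
  simpa using integral_abs_eq_zero_of_ae_nonneg (by simp [integral_neg, hX0])
    (hX.mono fun ω h => neg_nonneg.mpr h)

theorem integral_sub_mul_of_integral_eq_zero (hXi : Integrable X μ) (hX0 : ∫ ω, X ω ∂μ = 0)
    {f : Ω → ℝ} (hf : Integrable f μ) (t : ℝ) :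
    ∫ ω, (f ω - t * X ω) ∂μ = ∫ ω, f ω ∂μ := by
  rw [integral_sub hf (hXi.const_mul t), integral_const_mul, hX0, mul_zero, sub_zero]

variable [IsProbabilityMeasure μ]

theorem nonpos_of_ae_le_of_integral_eq_zero (hXi : Integrable X μ) (hX0 : ∫ ω, X ω ∂μ = 0)
    {b : ℝ} (hb : ∀ᵐ ω ∂μ, b ≤ X ω) : b ≤ 0 := by
  simpa [hX0] using integral_mono_ae (integrable_const b) hXi hb

theorem nonneg_of_ae_le_of_integral_eq_zero (hXi : Integrable X μ) (hX0 : ∫ ω, X ω ∂μ = 0)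
    {c : ℝ} (hc : ∀ᵐ ω ∂μ, X ω ≤ c) : 0 ≤ c := by
  simpa [hX0] using integral_mono_ae hXi (integrable_const c) hc

theorem mul_integral_abs_le_of_ae_mem_Icc (hXi : Integrable X μ) (hX0 : ∫ ω, X ω ∂μ = 0)
    {b c : ℝ} (hb : b ≤ 0) (hc : 0 ≤ c) (hX : ∀ᵐ ω ∂μ, X ω ∈ Set.Icc b c) :
    (c - b) * ∫ ω, |X ω| ∂μ ≤ -2 * b * c := by
  rw [← integral_const_mul, ← integral_sub_mul_of_integral_eq_zero hXi hX0
    (hXi.abs.const_mul _) (b + c)]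
  simpa using integral_mono_ae ((hXi.abs.const_mul _).sub (hXi.const_mul _))
    (integrable_const (-2 * b * c)) (hX.mono fun ω => mul_abs_sub_mul_le_of_mem_Icc hb hc)

theorem le_mul_integral_abs_of_ae_gap (hXi : Integrable X μ) (hX0 : ∫ ω, X ω ∂μ = 0)
    {b c ε : ℝ} (hb : b ≤ 0) (hc : 0 ≤ c) (hε : 0 ≤ ε)
    (hX : ∀ᵐ ω ∂μ, X ω ≤ b - ε ∨ c + ε ≤ X ω) :
    -2 * b * c + 2 * ε * min c (-b) ≤ (c - b) * ∫ ω, |X ω| ∂μ := by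
  rw [← integral_const_mul, ← integral_sub_mul_of_integral_eq_zero hXi hX0
    (hXi.abs.const_mul _) (b + c)]
  simpa using integral_mono_ae (integrable_const _) ((hXi.abs.const_mul _).sub (hXi.const_mul _))
    (hX.mono fun ω => le_mul_abs_sub_mul_of_gap hb hc hε)

theorem le_integral_abs_of_ae_gap (hXi : Integrable X μ) {b c ε : ℝ} (hb : b ≤ 0) (hc : 0 ≤ c)
    (hX : ∀ᵐ ω ∂μ, X ω ≤ b - ε ∨ c + ε ≤ X ω) : ε ≤ ∫ ω, |X ω| ∂μ := by
  simpa using integral_mono_ae (integrable_const ε) hXi.abs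
    (hX.mono fun ω => le_abs_of_gap hb hc)

end MeanZero

/-- Let `ε > 0` and `a ≤ b − ε`, `b ≤ c`, `c + ε ≤ d`. If `X`, `Y` are mean-zero real
random variables with `X ∈ [b, c]` a.s. and `Y ∈ [a, b − ε] ∪ [c + ε, d]` a.s., then
`E[|X|] < E[|Y|]`. -/
theorem stmt_17 {Ω₁ Ω₂ : Type*} [MeasurableSpace Ω₁] [MeasurableSpace Ω₂]
    (μ₁ : Measure Ω₁) (μ₂ : Measure Ω₂) [IsProbabilityMeasure μ₁] [IsProbabilityMeasure μ₂]
    (ε a b c d : ℝ) (hε : 0 < ε) (hab : a ≤ b - ε) (hbc : b ≤ c) (hcd : c + ε ≤ d)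
    (X : Ω₁ → ℝ) (Y : Ω₂ → ℝ) (hX : Measurable X) (hY : Measurable Y)
    (hXmean : ∫ ω, X ω ∂μ₁ = 0) (hYmean : ∫ ω, Y ω ∂μ₂ = 0)
    (hXsupp : ∀ᵐ ω ∂μ₁, X ω ∈ Set.Icc b c)
    (hYsupp : ∀ᵐ ω ∂μ₂, Y ω ∈ Set.Icc a (b - ε) ∪ Set.Icc (c + ε) d) :
    ∫ ω, |X ω| ∂μ₁ < ∫ ω, |Y ω| ∂μ₂ := by
  have hXi : Integrable X μ₁ := .of_mem_Icc b c hX.aemeasurable hXsupp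
  have hYi : Integrable Y μ₂ := .of_mem_Icc a d hY.aemeasurable <| hYsupp.mono fun ω h => by
    rcases h with ⟨h₁, h₂⟩ | ⟨h₁, h₂⟩ <;> constructor <;> linarith
  have hYgap : ∀ᵐ ω ∂μ₂, Y ω ≤ b - ε ∨ c + ε ≤ Y ω :=
    hYsupp.mono fun ω h => h.imp (·.2) (·.1)
  have hb := nonpos_of_ae_le_of_integral_eq_zero hXi hXmean (hXsupp.mono fun _ h => h.1)
  have hc := nonneg_of_ae_le_of_integral_eq_zero hXi hXmean (hXsupp.mono fun _ h => h.2)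
  have hεY := le_integral_abs_of_ae_gap hYi hb hc hYgap
  rcases hb.lt_or_eq with hb_neg | rfl
  · rcases hc.lt_or_eq with hc_pos | rfl
    · have hX' := mul_integral_abs_le_of_ae_mem_Icc hXi hXmean hb hc hXsupp
      have hY' := le_mul_integral_abs_of_ae_gap hYi hYmean hb hc hε.le hYgap
      have hmin : 0 < 2 * ε * min c (-b) := by
        have := lt_min hc_pos (neg_pos.2 hb_neg); positivity
      exact lt_of_mul_lt_mul_left (by linarith) (by linarith : 0 ≤ c - b)
    · rw [integral_abs_eq_zero_of_ae_nonpos hXmean (hXsupp.mono fun _ h => h.2)]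
      linarith
  · rw [integral_abs_eq_zero_of_ae_nonneg hXmean (hXsupp.mono fun _ h => h.1)]
    linarith
end

section
/- Fix an integer D ≥ 1. For each j ∈ {1,…,D}, let ε_j > 0, let a_j, b_j, c_j, d_j be reals with a_j ≤ b_j − ε_j, b_j ≤ c_j, c_j + ε_j ≤ d_j, and let s_j > 0. Let X and Y be ℝ^D-valued random vectors such that for every j, E[X_j] = E[Y_j] = 0, X_j ∈ [b_j, c_j] almost surely, and Y_j ∈ [a_j, b_j − ε_j] ∪ [c_j + ε_j, d_j] almost surely. Then E[ Σ_{j=1}^D |X_j| / s_j ] < E[ Σ_{j=1}^D |Y_j| / s_j ]. -/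
/-!
Let `p = b - ε < 0 < q = c + ε` and let `ℓ` be the secant of the convex function `|·|` through
`p` and `q`. By convexity `|x| < ℓ x` strictly inside `(p, q)`, which contains the support
`[b, c]` of `X` (note `b ≤ 0 ≤ c` since `X` has mean zero), while `ℓ y ≤ |y|` outside `(p, q)`,
where `Y` lives. Since `ℓ` is affine and both variables are centred,
`E|X| < E ℓ(X) = ℓ 0 = E ℓ(Y) ≤ E|Y|` in every coordinate; dividing by `s_j` and summing
gives the claim.
-/

open MeasureTheory Set

theorem integral_lt_integral_of_ae_lt {Ω : Type*} [MeasurableSpace Ω] {μ : Measure Ω} [NeZero μ]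
    {f g : Ω → ℝ} (hf : Integrable f μ) (hg : Integrable g μ) (hfg : ∀ᵐ ω ∂μ, f ω < g ω) :
    ∫ ω, f ω ∂μ < ∫ ω, g ω ∂μ := by
  have hpos : ∀ᵐ ω ∂μ, 0 < (g - f) ω := hfg.mono fun ω h => sub_pos.2 h
  rw [← sub_pos, ← integral_sub hg hf]
  refine (integral_pos_iff_support_of_nonneg_ae (hpos.mono fun _ h => h.le) (hg.sub hf)).2 ?_
  refine pos_iff_ne_zero.2 fun hnull => ?_
  obtain ⟨ω, hω, hω'⟩ := ((measure_eq_zero_iff_ae_notMem.1 hnull).and hpos).exists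
  exact hω (Function.mem_support.2 hω'.ne')

/-- For `p ≤ 0 ≤ q`, the line through `(p, |p|)` and `(q, |q|)`. -/
noncomputable def absSecant (p q x : ℝ) : ℝ := ((q + p) * x - 2 * p * q) / (q - p)

section absSecant

variable {p q x : ℝ}

theorem absSecant_eq_mul_add (p q x : ℝ) :
    absSecant p q x = (q + p) / (q - p) * x + absSecant p q 0 := by
  unfold absSecant; ring

theorem abs_lt_absSecant (hp : p < 0) (hq : 0 < q) (hx : x ∈ Ioo p q) : |x| < absSecant p q x := by
  rw [absSecant, lt_div_iff₀ (by linarith)]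
  obtain ⟨hpx, hxq⟩ := hx
  rcases le_total 0 x with h | h
  · rw [abs_of_nonneg h]; nlinarith
  · rw [abs_of_nonpos h]; nlinarith

theorem absSecant_le_abs (hp : p ≤ 0) (hq : 0 ≤ q) (hpq : p < q) (hx : x ≤ p ∨ q ≤ x) :
    absSecant p q x ≤ |x| := by
  rw [absSecant, div_le_iff₀ (by linarith)]
  rcases hx with h | h
  · rw [abs_of_nonpos (h.trans hp)]; nlinarith
  · rw [abs_of_nonneg (hq.trans h)]; nlinarith

variable {Ω : Type*} [MeasurableSpace Ω] {μ : Measure Ω} {f : Ω → ℝ}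

theorem MeasureTheory.Integrable.absSecant [IsFiniteMeasure μ] (hf : Integrable f μ) :
    Integrable (fun ω => absSecant p q (f ω)) μ := by
  rw [funext fun ω => absSecant_eq_mul_add p q (f ω)]
  exact (hf.const_mul _).add (integrable_const _)

theorem integral_absSecant [IsProbabilityMeasure μ] (hf : Integrable f μ)
    (hf0 : ∫ ω, f ω ∂μ = 0) : ∫ ω, absSecant p q (f ω) ∂μ = absSecant p q 0 := by
  rw [funext fun ω => absSecant_eq_mul_add p q (f ω),
    integral_add (hf.const_mul _) (integrable_const _), integral_const_mul, hf0]
  simp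

end absSecant

theorem integral_abs_lt_integral_abs_of_gap {Ω₁ Ω₂ : Type*} [MeasurableSpace Ω₁]
    [MeasurableSpace Ω₂] {μ₁ : Measure Ω₁} {μ₂ : Measure Ω₂} [IsProbabilityMeasure μ₁]
    [IsProbabilityMeasure μ₂] {f : Ω₁ → ℝ} {g : Ω₂ → ℝ} {b c ε : ℝ} (hε : 0 < ε)
    (hf : Integrable f μ₁) (hg : Integrable g μ₂) (hf0 : ∫ ω, f ω ∂μ₁ = 0)
    (hg0 : ∫ ω, g ω ∂μ₂ = 0) (hfs : ∀ᵐ ω ∂μ₁, f ω ∈ Icc b c)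
    (hgs : ∀ᵐ ω ∂μ₂, g ω ≤ b - ε ∨ c + ε ≤ g ω) :
    ∫ ω, |f ω| ∂μ₁ < ∫ ω, |g ω| ∂μ₂ := by
  obtain ⟨hb, hc⟩ : 0 ∈ Icc b c := hf0 ▸ (convex_Icc b c).integral_mem isClosed_Icc hfs hf
  have hp : b - ε < 0 := by linarith
  have hq : 0 < c + ε := by linarith
  calc ∫ ω, |f ω| ∂μ₁
      < ∫ ω, absSecant (b - ε) (c + ε) (f ω) ∂μ₁ :=
        integral_lt_integral_of_ae_lt hf.abs hf.absSecant <| hfs.mono fun _ h =>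
          abs_lt_absSecant hp hq ⟨by linarith [h.1], by linarith [h.2]⟩
    _ = absSecant (b - ε) (c + ε) 0 := integral_absSecant hf hf0
    _ = ∫ ω, absSecant (b - ε) (c + ε) (g ω) ∂μ₂ := (integral_absSecant hg hg0).symm
    _ ≤ ∫ ω, |g ω| ∂μ₂ :=
        integral_mono_ae hg.absSecant hg.abs <| hgs.mono fun _ h =>
          absSecant_le_abs hp.le hq.le (by linarith) h

/-- for each coordinate `j` let `epsilon j > 0`, `a j <= b j - epsilon j`,
`b j <= c j`, `c j + epsilon j <= d j`, and `s j > 0`. If `X` and `Y` are mean-zero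
random vectors with `X_j` supported in `[b j, c j]` a.s. and `Y_j` supported in
`[a j, b j - epsilon j] ∪ [c j + epsilon j, d j]` a.s., then the expected scaled l1 norm
of `X` is strictly smaller than that of `Y`:
`E[ Σ_j |X_j| / s_j ] < E[ Σ_j |Y_j| / s_j ]`. -/
theorem stmt_18 {Ω₁ Ω₂ : Type*} [MeasurableSpace Ω₁] [MeasurableSpace Ω₂]
    (μ₁ : Measure Ω₁) (μ₂ : Measure Ω₂) [IsProbabilityMeasure μ₁] [IsProbabilityMeasure μ₂]
    (D : ℕ) (hD : 1 ≤ D) (ε a b c d s : Fin D → ℝ)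
    (hε : ∀ j, 0 < ε j) (hab : ∀ j, a j ≤ b j - ε j) (hbc : ∀ j, b j ≤ c j)
    (hcd : ∀ j, c j + ε j ≤ d j) (hs : ∀ j, 0 < s j)
    (X : Ω₁ → Fin D → ℝ) (Y : Ω₂ → Fin D → ℝ) (hX : Measurable X) (hY : Measurable Y)
    (hXmean : ∀ j, ∫ ω, X ω j ∂μ₁ = 0) (hYmean : ∀ j, ∫ ω, Y ω j ∂μ₂ = 0)
    (hXsupp : ∀ j, ∀ᵐ ω ∂μ₁, X ω j ∈ Set.Icc (b j) (c j))
    (hYsupp : ∀ j, ∀ᵐ ω ∂μ₂,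
      Y ω j ∈ Set.Icc (a j) (b j - ε j) ∪ Set.Icc (c j + ε j) (d j)) :
    ∫ ω, ∑ j, |X ω j| / s j ∂μ₁ < ∫ ω, ∑ j, |Y ω j| / s j ∂μ₂ := by
  have hXint j : Integrable (fun ω => X ω j) μ₁ :=
    .of_mem_Icc (b j) (c j) hX.eval.aemeasurable (hXsupp j)
  have hYint j : Integrable (fun ω => Y ω j) μ₂ := by
    have hsub : Icc (a j) (b j - ε j) ∪ Icc (c j + ε j) (d j) ⊆ Icc (a j) (d j) :=
      union_subset (Icc_subset_Icc le_rfl (by linarith [hbc j, hcd j, hε j]))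
        (Icc_subset_Icc (by linarith [hab j, hbc j, hε j]) le_rfl)
    exact .of_mem_Icc (a j) (d j) hY.eval.aemeasurable ((hYsupp j).mono fun _ h => hsub h)
  have hcoord j : ∫ ω, |X ω j| ∂μ₁ < ∫ ω, |Y ω j| ∂μ₂ :=
    integral_abs_lt_integral_abs_of_gap (hε j) (hXint j) (hYint j) (hXmean j) (hYmean j)
      (hXsupp j) ((hYsupp j).mono fun _ h => h.imp (·.2) (·.1))
  rw [integral_finsetSum _ fun j _ => (hXint j).abs.div_const (s j),
    integral_finsetSum _ fun j _ => (hYint j).abs.div_const (s j)]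
  have : Nonempty (Fin D) := ⟨⟨0, hD⟩⟩
  refine Finset.sum_lt_sum_of_nonempty Finset.univ_nonempty fun j _ => ?_
  rw [integral_div, integral_div]
  exact div_lt_div_of_pos_right (hcoord j) (hs j)
end
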